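/- Let f : ℝ^n → ℝ be a nonnegative quasi-concave function. Then Δ_{−∞} f is also quasi-concave. -/
import Mathlib


open MeasureTheory Set
open scoped ENNReal

/-- A nonnegative `f : ℝⁿ → ℝ` is quasi-concave if
`f(t x + (1−t) y) ≥ min(f(x), f(y))` for all `x, y` and `t ∈ [0,1]`. -/
def QuasiConcaveFn {n : ℕ} (f : (Fin n → ℝ) → ℝ) : Prop :=
  ∀ x y : Fin n → ℝ, ∀ t : ℝ, t ∈ Set.Icc (0 : ℝ) 1 →
    min (f x) (f y) ≤ f (t • x + (1 - t) • y)

/-- The `(−∞)`-difference function of `f`: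
`Δ_{−∞} f(z) = sup { min(f(x), f(−y)) : (x+y)/2 = z }`, valued in `[0,∞]`. -/
noncomputable def diffNegInf {n : ℕ} (f : (Fin n → ℝ) → ℝ) (z : Fin n → ℝ) : ℝ≥0∞ :=
  sSup {r : ℝ≥0∞ | ∃ x y : Fin n → ℝ, (1 / 2 : ℝ) • (x + y) = z ∧
    r = ENNReal.ofReal (min (f x) (f (-y)))}

/-- If `f` is nonnegative and quasi-concave, then `Δ_{−∞} f` is quasi-concave. -/
theorem diffNegInf_quasiConcave {n : ℕ} (f : (Fin n → ℝ) → ℝ)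
    (hf0 : ∀ x, 0 ≤ f x) (hf : QuasiConcaveFn f) :
    ∀ x y : Fin n → ℝ, ∀ t : ℝ, t ∈ Set.Icc (0 : ℝ) 1 →
      min (diffNegInf f x) (diffNegInf f y) ≤
        diffNegInf f (t • x + (1 - t) • y) := by
  intro x y t ht
  have hmin : min (diffNegInf f x) (diffNegInf f y)
      = diffNegInf f x ⊓ diffNegInf f y := rfl
  rw [hmin, diffNegInf, diffNegInf, sSup_inf_sSup]
  refine iSup₂_le ?_
  rintro ⟨r1, r2⟩ ⟨⟨x1, y1, h1, rfl⟩, ⟨x2, y2, h2, rfl⟩⟩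
  refine le_trans ?_ (le_sSup ⟨t • x1 + (1 - t) • x2, t • y1 + (1 - t) • y2, ?_, rfl⟩)
  · have hY : -(t • y1 + (1 - t) • y2) = t • (-y1) + (1 - t) • (-y2) := by module
    rw [hY]
    have hX := hf x1 x2 t ht
    have hYle := hf (-y1) (-y2) t ht
    have : (ENNReal.ofReal (min (f x1) (f (-y1))) ⊓ ENNReal.ofReal (min (f x2) (f (-y2))))
        = ENNReal.ofReal (min (min (f x1) (f (-y1))) (min (f x2) (f (-y2)))) := by
      exact (Monotone.map_min (fun _ _ h => ENNReal.ofReal_le_ofReal h)).symm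
    rw [this]
    apply ENNReal.ofReal_le_ofReal
    refine le_min (le_trans ?_ hX) (le_trans ?_ hYle)
    · exact min_le_min (min_le_left _ _) (min_le_left _ _)
    · exact min_le_min (min_le_right _ _) (min_le_right _ _)
  · rw [← h1, ← h2]
    module
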